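/- Consistency of the plug-in variance estimator for the Van Valen MCV (Lemma 1, variant VV): Under the stated assumptions with Σ ≠ 0, the plug-in estimator σ̂²_n = (1/4)·(Ĉ^VV_n)⁻²·A_VV(μ̂_n, Σ̂_n)·Σ̂_{X̃,n}·A_VV(μ̂_n, Σ̂_n)ᵀ converges in probability, as n → ∞, to σ²_{C^VV} = (1/4)·(C^VV)⁻²·A_VV(μ, Σ)·Σ_X̃·A_VV(μ, Σ)ᵀ. -/

import Mathlib

open MeasureTheory ProbabilityTheory Filter Matrix Topology BigOperators

noncomputable section

/-- Sample mean `μ̂_n` of the first `n` observations. -/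
def empMean {Ω : Type} {d : ℕ} (X : ℕ → Ω → Fin d → ℝ) (n : ℕ) (ω : Ω) : Fin d → ℝ :=
  fun a => (n : ℝ)⁻¹ * ∑ j ∈ Finset.range n, X j ω a

/-- Sample covariance matrix `Σ̂_n` of the first `n` observations. -/
def empCov {Ω : Type} {d : ℕ} (X : ℕ → Ω → Fin d → ℝ) (n : ℕ) (ω : Ω) :
    Matrix (Fin d) (Fin d) ℝ :=
  fun a b => (n : ℝ)⁻¹ * ∑ j ∈ Finset.range n,
    (X j ω a - empMean X n ω a) * (X j ω b - empMean X n ω b)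

/-- Empirical third-moment matrix `Ψ̂₃,n`. -/
def empPsi3 {Ω : Type} {d : ℕ} (X : ℕ → Ω → Fin d → ℝ) (n : ℕ) (ω : Ω) :
    Matrix (Fin d × Fin d) (Fin d) ℝ :=
  fun p s => ((n : ℝ)⁻¹ * ∑ j ∈ Finset.range n, X j ω p.1 * X j ω p.2 * X j ω s)
    - ((n : ℝ)⁻¹ * ∑ j ∈ Finset.range n, X j ω p.1 * X j ω p.2)
      * ((n : ℝ)⁻¹ * ∑ j ∈ Finset.range n, X j ω s)

/-- Empirical fourth-moment matrix `Ψ̂₄,n`. -/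
def empPsi4 {Ω : Type} {d : ℕ} (X : ℕ → Ω → Fin d → ℝ) (n : ℕ) (ω : Ω) :
    Matrix (Fin d × Fin d) (Fin d × Fin d) ℝ :=
  fun p q => ((n : ℝ)⁻¹ * ∑ j ∈ Finset.range n, X j ω p.1 * X j ω p.2 * X j ω q.1 * X j ω q.2)
    - ((n : ℝ)⁻¹ * ∑ j ∈ Finset.range n, X j ω p.1 * X j ω p.2)
      * ((n : ℝ)⁻¹ * ∑ j ∈ Finset.range n, X j ω q.1 * X j ω q.2)

/-- The matrix `D̃(x) ∈ ℝ^{d²×d}`; the row index `(a, r)` plays the role of the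
linear index `(a−1)d + r`. -/
def Dtilde {d : ℕ} (x : Fin d → ℝ) : Matrix (Fin d × Fin d) (Fin d) ℝ :=
  fun p s =>
    (if s = p.1 ∧ p.1 ≠ p.2 then -(x p.2) else 0)
      + (if s = p.2 ∧ p.2 = p.1 then -(2 * x s) else 0)
      + (if p.2 = s ∧ s ≠ p.1 then -(x p.1) else 0)

/-- The vectorization `vec(I_d)` of the identity matrix. -/
def vecId (d : ℕ) : Fin d × Fin d → ℝ := fun p => if p.2 = p.1 then 1 else 0

/-- The row vector `A_VV(m, S) ∈ ℝ^{1×(d+d²)}`. -/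
def Avv {d : ℕ} (m : Fin d → ℝ) (S : Matrix (Fin d) (Fin d) ℝ) :
    (Fin d ⊕ Fin d × Fin d) → ℝ :=
  Sum.elim
    (fun s => -2 * S.trace * m s / (m ⬝ᵥ m) ^ 2
      + (m ⬝ᵥ m)⁻¹ * Matrix.vecMul (vecId d) (Dtilde m) s)
    (fun p => (m ⬝ᵥ m)⁻¹ * vecId d p)

/-- The Van Valen multivariate coefficient of variation `C^VV = sqrt(tr S/(mᵀm))`. -/
def CVVof {d : ℕ} (m : Fin d → ℝ) (S : Matrix (Fin d) (Fin d) ℝ) : ℝ :=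
  Real.sqrt (S.trace / (m ⬝ᵥ m))

/-- The variance functional `σ²_{C^VV}(m, S, Ψ₃, Ψ₄)
  = (1/4)(C^VV)⁻² A_VV(m,S) Σ_X̃ A_VV(m,S)ᵀ`;  applied to the population (resp.
empirical) quantities it gives the asymptotic variance (resp. plug-in estimator). -/
def sigma2VV {d : ℕ} (m : Fin d → ℝ) (S : Matrix (Fin d) (Fin d) ℝ)
    (Ψ3 : Matrix (Fin d × Fin d) (Fin d) ℝ)
    (Ψ4 : Matrix (Fin d × Fin d) (Fin d × Fin d) ℝ) : ℝ :=
  (1 / 4) * ((CVVof m S) ^ 2)⁻¹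
    * (Avv m S ⬝ᵥ (Matrix.fromBlocks S Ψ3ᵀ Ψ3 Ψ4).mulVec (Avv m S))

/-!
The empirical moment data `(μ̂_n, Σ̂_n, Ψ̂₃,n, Ψ̂₄,n)` are continuous functions of sample averages
of monomials of degree at most four in the coordinates, which are integrable under the fourth
moment assumption; by the strong law of large numbers they converge almost surely to
`(μ, Σ, Ψ₃, Ψ₄)`. The functional `σ²` is continuous at every point where `tr S / (mᵀm) > 0`, and
this holds at the population point because `μ ≠ 0` and `Σ ≠ 0` (a covariance matrix with zero
trace vanishes). Hence the plug-in estimator converges almost surely, and so in probability.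
-/

abbrev MomentParams (d : ℕ) := (Fin d → ℝ) × Matrix (Fin d) (Fin d) ℝ
  × Matrix (Fin d × Fin d) (Fin d) ℝ × Matrix (Fin d × Fin d) (Fin d × Fin d) ℝ

def empMoments {Ω : Type} {d : ℕ} (X : ℕ → Ω → Fin d → ℝ) (n : ℕ) (ω : Ω) : MomentParams d :=
  (empMean X n ω, empCov X n ω, empPsi3 X n ω, empPsi4 X n ω)

-- Mathlib puts no measurable structure on `Matrix`; we use the product one.
instance {m n : Type*} : MeasurableSpace (Matrix m n ℝ) := MeasurableSpace.pi

instance {m n : Type*} [Countable m] [Countable n] : SecondCountableTopology (Matrix m n ℝ) :=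
  inferInstanceAs (SecondCountableTopology (m → n → ℝ))

instance {m n : Type*} [Countable m] [Countable n] : BorelSpace (Matrix m n ℝ) :=
  inferInstanceAs (BorelSpace (m → n → ℝ))

section Functional

variable {d : ℕ}

theorem continuous_Dtilde : Continuous (Dtilde (d := d)) := by
  refine continuous_pi fun p => continuous_pi fun s => ?_
  unfold Dtilde
  split_ifs <;> fun_prop

theorem continuousAt_Avv {m : Fin d → ℝ} (S : Matrix (Fin d) (Fin d) ℝ) (hm : m ⬝ᵥ m ≠ 0) :
    ContinuousAt (fun q : (Fin d → ℝ) × Matrix (Fin d) (Fin d) ℝ => Avv q.1 q.2) (m, S) := by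
  have := continuous_Dtilde (d := d)
  refine continuousAt_pi.2 ?_
  rintro (s | p)
  · simp only [Avv, Sum.elim_inl]
    fun_prop (disch := simpa using hm)
  · simp only [Avv, Sum.elim_inr]
    fun_prop (disch := simpa using hm)

theorem continuousAt_sigma2VV {q : MomentParams d} (hq : 0 < q.2.1.trace / (q.1 ⬝ᵥ q.1)) :
    ContinuousAt (fun q : MomentParams d => sigma2VV q.1 q.2.1 q.2.2.1 q.2.2.2) q := by
  have hmm : q.1 ⬝ᵥ q.1 ≠ 0 := fun h => by simp [h] at hq
  have hA : ContinuousAt (fun q : MomentParams d => Avv q.1 q.2.1) q :=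
    (continuousAt_Avv q.2.1 hmm).comp (f := fun q : MomentParams d => (q.1, q.2.1)) (by fun_prop)
  have hsq : Real.sqrt (q.2.1.trace / (q.1 ⬝ᵥ q.1)) ^ 2 ≠ 0 := by positivity
  unfold sigma2VV CVVof
  fun_prop (disch := assumption)

-- `Real.sqrt` of a nonpositive number is `0`, and `0⁻¹ = 0`.
theorem sigma2VV_eq_zero_of_nonpos {m : Fin d → ℝ} {S : Matrix (Fin d) (Fin d) ℝ}
    (Ψ3 : Matrix (Fin d × Fin d) (Fin d) ℝ) (Ψ4 : Matrix (Fin d × Fin d) (Fin d × Fin d) ℝ)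
    (h : S.trace / (m ⬝ᵥ m) ≤ 0) : sigma2VV m S Ψ3 Ψ4 = 0 := by
  simp [sigma2VV, CVVof, Real.sqrt_eq_zero'.2 h]

theorem measurable_sigma2VV :
    Measurable (fun q : MomentParams d => sigma2VV q.1 q.2.1 q.2.2.1 q.2.2.2) := by
  classical
  set U := {q : MomentParams d | 0 < q.2.1.trace / (q.1 ⬝ᵥ q.1)}
  have hU : MeasurableSet U := measurableSet_lt measurable_const (by fun_prop)
  have hpiece : (fun q : MomentParams d => sigma2VV q.1 q.2.1 q.2.2.1 q.2.2.2)
      = U.piecewise (fun q => sigma2VV q.1 q.2.1 q.2.2.1 q.2.2.2) 0 := by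
    funext q
    by_cases hq : q ∈ U
    · rw [Set.piecewise_eq_of_mem _ _ _ hq]
    · rw [Set.piecewise_eq_of_notMem _ _ _ hq, Pi.zero_apply,
        sigma2VV_eq_zero_of_nonpos _ _ (not_lt.1 hq)]
  rw [hpiece]
  exact ContinuousOn.measurable_piecewise
    (fun q hq => (continuousAt_sigma2VV hq).continuousWithinAt) continuousOn_const hU

end Functional

theorem pow_le_one_add_pow {t : ℝ} (ht : 0 ≤ t) {k p : ℕ} (hk : k ≤ p) : t ^ k ≤ 1 + t ^ p := by
  rcases le_total t 1 with h | h
  · exact (pow_le_one₀ ht h).trans (le_add_of_nonneg_right (by positivity))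
  · exact (pow_le_pow_right₀ h hk).trans (le_add_of_nonneg_left zero_le_one)

theorem empCov_apply_eq {Ω : Type} {d : ℕ} (X : ℕ → Ω → Fin d → ℝ) {n : ℕ} (hn : n ≠ 0)
    (ω : Ω) (a b : Fin d) :
    empCov X n ω a b = (n : ℝ)⁻¹ * ∑ j ∈ Finset.range n, X j ω a * X j ω b
      - empMean X n ω a * empMean X n ω b := by
  simp only [empCov, empMean, sub_mul, mul_sub, Finset.sum_sub_distrib, ← Finset.mul_sum,
    ← Finset.sum_mul, Finset.sum_const, Finset.card_range, nsmul_eq_mul]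
  field_simp
  ring

theorem tendsto_empCov_apply {Ω : Type} {d : ℕ} {X : ℕ → Ω → Fin d → ℝ} {ω : Ω} {a b : Fin d}
    {ma mb M : ℝ} (ha : Tendsto (fun n => empMean X n ω a) atTop (𝓝 ma))
    (hb : Tendsto (fun n => empMean X n ω b) atTop (𝓝 mb))
    (hab : Tendsto (fun n : ℕ => (n : ℝ)⁻¹ * ∑ j ∈ Finset.range n, X j ω a * X j ω b)
      atTop (𝓝 M)) :
    Tendsto (fun n => empCov X n ω a b) atTop (𝓝 (M - ma * mb)) := by
  refine (hab.sub (ha.mul hb)).congr' ?_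
  filter_upwards [eventually_ne_atTop 0] with n hn
  exact (empCov_apply_eq X hn ω a b).symm

section Probability

variable {Ω : Type} [MeasurableSpace Ω] {P : Measure Ω} {d : ℕ}

theorem measurable_empMoments {X : ℕ → Ω → Fin d → ℝ} (hX : ∀ n, Measurable (X n)) (n : ℕ) :
    Measurable (empMoments X n) := by
  unfold empMoments empCov empMean empPsi3 empPsi4
  fun_prop

theorem tendsto_measure_lt_abs_sub [IsFiniteMeasure P] {f : ℕ → Ω → ℝ} {c : ℝ}
    (hf : ∀ n, AEStronglyMeasurable (f n) P)
    (hfc : ∀ᵐ ω ∂P, Tendsto (fun n => f n ω) atTop (𝓝 c)) {ε : ℝ} (hε : 0 < ε) :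
    Tendsto (fun n => P {ω | ε < |f n ω - c|}) atTop (𝓝 0) := by
  refine tendsto_of_tendsto_of_tendsto_of_le_of_le tendsto_const_nhds
    (tendstoInMeasure_iff_dist.1 (tendstoInMeasure_of_tendsto_ae hf hfc) ε hε)
    (fun _ => zero_le) fun n => measure_mono fun ω hω => ?_
  change ε ≤ dist (f n ω) c
  exact (Real.dist_eq _ _).symm ▸ hω.le

theorem integrable_monomial [IsFiniteMeasure P] {Y : Ω → Fin d → ℝ} (hY : Measurable Y) {p : ℕ}
    (hmom : Integrable (fun ω => ‖Y ω‖ ^ p) P) {k : ℕ} (hk : k ≤ p) (ι : Fin k → Fin d) :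
    Integrable (fun ω => ∏ i, Y ω (ι i)) P := by
  refine ((integrable_const 1).add hmom).mono' (by fun_prop) (.of_forall fun ω => ?_)
  calc ‖∏ i, Y ω (ι i)‖ = ∏ i, ‖Y ω (ι i)‖ := norm_prod _ _
    _ ≤ ∏ _i : Fin k, ‖Y ω‖ :=
        Finset.prod_le_prod (fun _ _ => norm_nonneg _) fun i _ => norm_le_pi_norm (Y ω) (ι i)
    _ = ‖Y ω‖ ^ k := by simp
    _ ≤ 1 + ‖Y ω‖ ^ p := pow_le_one_add_pow (norm_nonneg _) hk

theorem ae_tendsto_avg_comp {E : Type*} [MeasurableSpace E] {X : ℕ → Ω → E}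
    (hindep : iIndepFun X P) (hident : ∀ n, IdentDistrib (X n) (X 0) P P)
    {g : E → ℝ} (hg : Measurable g) (hint : Integrable (fun ω => g (X 0 ω)) P) :
    ∀ᵐ ω ∂P, Tendsto (fun n : ℕ => (n : ℝ)⁻¹ * ∑ j ∈ Finset.range n, g (X j ω)) atTop
      (𝓝 (∫ ω, g (X 0 ω) ∂P)) := by
  filter_upwards [strong_law_ae_real (fun j ω => g (X j ω)) hint
    (fun i j hij => (hindep.indepFun hij).comp hg hg) (fun i => (hident i).comp hg)] with ω hω
  simpa [div_eq_inv_mul] using hω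

theorem ae_tendsto_avg_monomial [IsFiniteMeasure P] {X : ℕ → Ω → Fin d → ℝ}
    (hX : Measurable (X 0)) (hindep : iIndepFun X P) (hident : ∀ n, IdentDistrib (X n) (X 0) P P)
    {p : ℕ} (hmom : Integrable (fun ω => ‖X 0 ω‖ ^ p) P) :
    ∀ᵐ ω ∂P, ∀ k ≤ p, ∀ ι : Fin k → Fin d,
      Tendsto (fun n : ℕ => (n : ℝ)⁻¹ * ∑ j ∈ Finset.range n, ∏ i, X j ω (ι i)) atTop
        (𝓝 (∫ ω, ∏ i, X 0 ω (ι i) ∂P)) := by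
  refine ae_all_iff.2 fun k => eventually_imp_distrib_left.2 fun hk => ae_all_iff.2 fun ι => ?_
  exact ae_tendsto_avg_comp (g := fun x => ∏ i, x (ι i)) hindep hident (by fun_prop)
    (integrable_monomial hX hmom hk ι)

theorem ae_tendsto_empMoments [IsFiniteMeasure P] {X : ℕ → Ω → Fin d → ℝ} (hX : Measurable (X 0))
    (hindep : iIndepFun X P) (hident : ∀ n, IdentDistrib (X n) (X 0) P P)
    (hmom : Integrable (fun ω => ‖X 0 ω‖ ^ 4) P)
    {μ : Fin d → ℝ} (hμdef : ∀ a, μ a = ∫ ω, X 0 ω a ∂P)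
    {SigM : Matrix (Fin d) (Fin d) ℝ}
    (hSig : ∀ a b, SigM a b = (∫ ω, X 0 ω a * X 0 ω b ∂P) - μ a * μ b)
    {Ψ3 : Matrix (Fin d × Fin d) (Fin d) ℝ}
    (hΨ3 : ∀ a r s, Ψ3 (a, r) s
      = (∫ ω, X 0 ω a * X 0 ω r * X 0 ω s ∂P)
        - (∫ ω, X 0 ω a * X 0 ω r ∂P) * (∫ ω, X 0 ω s ∂P))
    {Ψ4 : Matrix (Fin d × Fin d) (Fin d × Fin d) ℝ}
    (hΨ4 : ∀ a r b s, Ψ4 (a, r) (b, s)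
      = (∫ ω, X 0 ω a * X 0 ω r * X 0 ω b * X 0 ω s ∂P)
        - (∫ ω, X 0 ω a * X 0 ω r ∂P) * (∫ ω, X 0 ω b * X 0 ω s ∂P)) :
    ∀ᵐ ω ∂P, Tendsto (fun n => empMoments X n ω) atTop (𝓝 (μ, SigM, Ψ3, Ψ4)) := by
  filter_upwards [ae_tendsto_avg_monomial hX hindep hident hmom] with ω h
  have h1 (a) : Tendsto (fun n => empMean X n ω a) atTop (𝓝 (μ a)) := by
    simpa [empMean, ← hμdef] using h 1 (by norm_num) ![a]
  have h2 (a b) : Tendsto (fun n : ℕ => (n : ℝ)⁻¹ * ∑ j ∈ Finset.range n, X j ω a * X j ω b)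
      atTop (𝓝 (∫ ω, X 0 ω a * X 0 ω b ∂P)) := by
    simpa [Fin.prod_univ_two] using h 2 (by norm_num) ![a, b]
  have h3 (a b c) : Tendsto
      (fun n : ℕ => (n : ℝ)⁻¹ * ∑ j ∈ Finset.range n, X j ω a * X j ω b * X j ω c)
      atTop (𝓝 (∫ ω, X 0 ω a * X 0 ω b * X 0 ω c ∂P)) := by
    simpa [Fin.prod_univ_three, mul_assoc] using h 3 (by norm_num) ![a, b, c]
  have h4 (a b c e) : Tendsto
      (fun n : ℕ => (n : ℝ)⁻¹ * ∑ j ∈ Finset.range n, X j ω a * X j ω b * X j ω c * X j ω e)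
      atTop (𝓝 (∫ ω, X 0 ω a * X 0 ω b * X 0 ω c * X 0 ω e ∂P)) := by
    simpa [Fin.prod_univ_four, mul_assoc] using h 4 le_rfl ![a, b, c, e]
  have hmean : Tendsto (fun n => empMean X n ω) atTop (𝓝 μ) := tendsto_pi_nhds.2 h1
  have hcov : Tendsto (fun n => empCov X n ω) atTop (𝓝 SigM) := by
    refine tendsto_pi_nhds.2 fun a => tendsto_pi_nhds.2 fun b => ?_
    rw [hSig]
    exact tendsto_empCov_apply (h1 a) (h1 b) (h2 a b)
  have hPsi3 : Tendsto (fun n => empPsi3 X n ω) atTop (𝓝 Ψ3) := by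
    refine tendsto_pi_nhds.2 fun ⟨a, r⟩ => tendsto_pi_nhds.2 fun s => ?_
    rw [hΨ3, ← hμdef]
    exact (h3 a r s).sub ((h2 a r).mul (h1 s))
  have hPsi4 : Tendsto (fun n => empPsi4 X n ω) atTop (𝓝 Ψ4) := by
    refine tendsto_pi_nhds.2 fun ⟨a, r⟩ => tendsto_pi_nhds.2 fun ⟨b, s⟩ => ?_
    rw [hΨ4]
    exact (h4 a r b s).sub ((h2 a r).mul (h2 b s))
  exact hmean.prodMk_nhds (hcov.prodMk_nhds (hPsi3.prodMk_nhds hPsi4))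

theorem trace_pos_of_covariance_ne_zero [IsProbabilityMeasure P] {Y : Ω → Fin d → ℝ}
    (hY : ∀ a, MemLp (fun ω => Y ω a) 2 P)
    {μ : Fin d → ℝ} (hμdef : ∀ a, μ a = ∫ ω, Y ω a ∂P) {SigM : Matrix (Fin d) (Fin d) ℝ}
    (hSig : ∀ a b, SigM a b = (∫ ω, Y ω a * Y ω b ∂P) - μ a * μ b) (hSig0 : SigM ≠ 0) :
    0 < SigM.trace := by
  have hdiag (a) : SigM a a = Var[fun ω => Y ω a; P] := by
    rw [hSig, variance_eq_sub (hY a), hμdef]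
    simp [sq]
  have hdiag_nonneg (a) : 0 ≤ SigM a a := (hdiag a).trans_ge (variance_nonneg _ _)
  refine lt_of_le_of_ne (Finset.sum_nonneg fun a _ => hdiag_nonneg a) fun htr => hSig0 ?_
  have hconst (a) : ∀ᵐ ω ∂P, Y ω a = μ a := by
    rw [hμdef]
    refine ae_eq_integral_of_variance_eq_zero (hY a) ?_
    rw [← hdiag]
    exact (Finset.sum_eq_zero_iff_of_nonneg fun a _ => hdiag_nonneg a).1 htr.symm a
      (Finset.mem_univ a)
  ext a b
  rw [hSig, integral_congr_ae ((hconst a).mono fun ω hω => by rw [hω]), integral_const_mul, ← hμdef]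
  simp

end Probability

theorem sigma2VV_plugin_consistent_general
    (d : ℕ)
    {Ω : Type} [MeasurableSpace Ω] (P : Measure Ω) [IsProbabilityMeasure P]
    (X : ℕ → Ω → Fin d → ℝ) (hmeas : ∀ n, Measurable (X n))
    (hindep : iIndepFun X P)
    (hident : ∀ n, IdentDistrib (X n) (X 0) P P)
    (hmom : Integrable (fun ω => ‖X 0 ω‖ ^ 4) P)
    (μ : Fin d → ℝ) (hμdef : ∀ a, μ a = ∫ ω, X 0 ω a ∂P) (hμ : μ ≠ 0)
    (SigM : Matrix (Fin d) (Fin d) ℝ)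
    (hSig : ∀ a b, SigM a b = (∫ ω, X 0 ω a * X 0 ω b ∂P) - μ a * μ b)
    (hSig0 : SigM ≠ 0)
    (Ψ3 : Matrix (Fin d × Fin d) (Fin d) ℝ)
    (hΨ3 : ∀ a r s, Ψ3 (a, r) s
      = (∫ ω, X 0 ω a * X 0 ω r * X 0 ω s ∂P)
        - (∫ ω, X 0 ω a * X 0 ω r ∂P) * (∫ ω, X 0 ω s ∂P))
    (Ψ4 : Matrix (Fin d × Fin d) (Fin d × Fin d) ℝ)
    (hΨ4 : ∀ a r b s, Ψ4 (a, r) (b, s)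
      = (∫ ω, X 0 ω a * X 0 ω r * X 0 ω b * X 0 ω s ∂P)
        - (∫ ω, X 0 ω a * X 0 ω r ∂P) * (∫ ω, X 0 ω b * X 0 ω s ∂P)) :
    ∀ ε : ℝ, 0 < ε →
      Tendsto
        (fun n : ℕ => P {ω |
          ε < |sigma2VV (empMean X n ω) (empCov X n ω) (empPsi3 X n ω) (empPsi4 X n ω)
                - sigma2VV μ SigM Ψ3 Ψ4|})
        atTop (𝓝 0) := by
  intro ε hε
  have hL2 (a : Fin d) : MemLp (fun ω => X 0 ω a) 2 P :=
    (memLp_two_iff_integrable_sq (by fun_prop)).2 <| by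
      simpa [Fin.prod_univ_two, sq] using integrable_monomial (hmeas 0) hmom (by norm_num) ![a, a]
  have hpos : 0 < SigM.trace / (μ ⬝ᵥ μ) :=
    div_pos (trace_pos_of_covariance_ne_zero hL2 hμdef hSig hSig0)
      (by simpa using dotProduct_star_self_pos_iff.2 hμ)
  refine tendsto_measure_lt_abs_sub
    (fun n => (measurable_sigma2VV.comp (measurable_empMoments hmeas n)).aestronglyMeasurable)
    ?_ hε
  filter_upwards [ae_tendsto_empMoments (hmeas 0) hindep hident hmom hμdef hSig hΨ3 hΨ4]
    with ω hω
  -- Elaborated before matching the goal, to avoid a costly unfolding of `sigma2VV`.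
  exact ((continuousAt_sigma2VV hpos).tendsto.comp hω :)

/-- Consistency of the plug-in variance estimator for the Van
Valen MCV: the plug-in estimator `σ̂²_n` converges in probability to `σ²_{C^VV}`. -/
theorem sigma2VV_plugin_consistent
    (d : ℕ) (hd : 1 ≤ d)
    {Ω : Type} [MeasurableSpace Ω] (P : Measure Ω) [IsProbabilityMeasure P]
    (X : ℕ → Ω → Fin d → ℝ) (hmeas : ∀ n, Measurable (X n))
    (hindep : iIndepFun X P)
    (hident : ∀ n, IdentDistrib (X n) (X 0) P P)
    (hmom : Integrable (fun ω => ‖X 0 ω‖ ^ 4) P)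
    (μ : Fin d → ℝ) (hμdef : ∀ a, μ a = ∫ ω, X 0 ω a ∂P) (hμ : μ ≠ 0)
    (SigM : Matrix (Fin d) (Fin d) ℝ)
    (hSig : ∀ a b, SigM a b = (∫ ω, X 0 ω a * X 0 ω b ∂P) - μ a * μ b)
    (hSig0 : SigM ≠ 0)
    (Ψ3 : Matrix (Fin d × Fin d) (Fin d) ℝ)
    (hΨ3 : ∀ a r s, Ψ3 (a, r) s
      = (∫ ω, X 0 ω a * X 0 ω r * X 0 ω s ∂P)
        - (∫ ω, X 0 ω a * X 0 ω r ∂P) * (∫ ω, X 0 ω s ∂P))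
    (Ψ4 : Matrix (Fin d × Fin d) (Fin d × Fin d) ℝ)
    (hΨ4 : ∀ a r b s, Ψ4 (a, r) (b, s)
      = (∫ ω, X 0 ω a * X 0 ω r * X 0 ω b * X 0 ω s ∂P)
        - (∫ ω, X 0 ω a * X 0 ω r ∂P) * (∫ ω, X 0 ω b * X 0 ω s ∂P)) :
    ∀ ε : ℝ, 0 < ε →
      Tendsto
        (fun n : ℕ => P {ω |
          ε < |sigma2VV (empMean X n ω) (empCov X n ω) (empPsi3 X n ω) (empPsi4 X n ω)
                - sigma2VV μ SigM Ψ3 Ψ4|})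
        atTop (𝓝 0) :=
  sigma2VV_plugin_consistent_general d P X hmeas hindep hident hmom μ hμdef hμ SigM hSig hSig0 Ψ3
    hΨ3 Ψ4 hΨ4

end
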